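/- arXiv:1310.1016 — 7 statements merged into one kernel-verified Lean document; each statement's English description precedes it below -/
import Mathlib

section
/- Let L be a relational first-order language, A an L-structure, and ι a nonempty type. Then every positive Horn sentence true in A is true in the power structure A^ι. -/
/-!
Realization in `A^ι` is computed coordinatewise: atoms hold coordinatewise by the definition of
the power, conjunction and `∀` commute with `∀ i`, and for `∃` one chooses a witness in every
coordinate separately. Negation and disjunction, which are excluded, do not commute with `∀ i`.
-/

open FirstOrder Language

/-- Positive Horn bounded formulas over a relational language: built from atomic
formulas `R(v₁,…,vₙ)` (relation symbols applied to variables, no equality) using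
only conjunction, existential quantification, and universal quantification. -/
inductive IsPH (L : FirstOrder.Language) : ∀ {n : ℕ}, L.BoundedFormula Empty n → Prop
  | rel {n l : ℕ} (R : L.Relations l) (v : Fin l → Fin n) :
      IsPH L (BoundedFormula.rel R fun i => Term.var (Sum.inr (v i)))
  | inf {n : ℕ} {φ ψ : L.BoundedFormula Empty n} :
      IsPH L φ → IsPH L ψ → IsPH L (φ ⊓ ψ)
  | ex {n : ℕ} {φ : L.BoundedFormula Empty (n + 1)} : IsPH L φ → IsPH L φ.ex
  | all {n : ℕ} {φ : L.BoundedFormula Empty (n + 1)} : IsPH L φ → IsPH L φ.all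

/-- The power structure `A^ι`: domain `ι → A`, relations holding componentwise. -/
def powStruct (L : FirstOrder.Language) (ι : Type*) (A : Type*) [L.Structure A] :
    L.Structure (ι → A) where
  funMap := fun f x i => Structure.funMap f fun j => x j i
  RelMap := fun R x => ∀ i : ι, Structure.RelMap R fun j => x j i

/-- `φ` is true in the `L`-structure on `M` given by `S`. -/
def RealizeIn (L : FirstOrder.Language) (M : Type*) (S : L.Structure M)
    (φ : L.Sentence) : Prop :=
  @FirstOrder.Language.Sentence.Realize L M S φ

theorem Fin.snoc_apply_eval {ι A : Type*} {n : ℕ} (xs : Fin n → ι → A) (x : ι → A) (i : ι) :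
    (fun j => (Fin.snoc xs x : Fin (n + 1) → ι → A) j i) = Fin.snoc (fun j => xs j i) (x i) :=
  Fin.comp_snoc (Function.eval i) xs x

theorem IsPH.realize_powStruct {L : FirstOrder.Language} {A ι : Type*} [L.Structure A]
    {n : ℕ} {φ : L.BoundedFormula Empty n} (hφ : IsPH L φ) (v : Empty → ι → A)
    (xs : Fin n → ι → A) (h : ∀ i, φ.Realize (fun e => v e i) fun j => xs j i) :
    @BoundedFormula.Realize L _ (powStruct L ι A) _ _ φ v xs := by
  induction hφ with
  | rel R w => exact h
  | inf _ _ ihφ ihψ =>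
    simp only [BoundedFormula.realize_inf] at h ⊢
    exact ⟨ihφ xs fun i => (h i).1, ihψ xs fun i => (h i).2⟩
  | ex _ ih =>
    simp only [BoundedFormula.realize_ex] at h ⊢
    choose x hx using h
    exact ⟨x, ih _ fun i => by rw [Fin.snoc_apply_eval]; exact hx i⟩
  | all _ ih =>
    simp only [BoundedFormula.realize_all] at h ⊢
    exact fun x => ih _ fun i => by rw [Fin.snoc_apply_eval]; exact h i (x i)

theorem stmt1_general {L : FirstOrder.Language}
    {A : Type*} [L.Structure A] (ι : Type*)
    (φ : L.Sentence) (hφ : IsPH L φ) (hA : A ⊨ φ) :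
    RealizeIn L (ι → A) (powStruct L ι A) φ := by
  refine hφ.realize_powStruct default default fun _ => ?_
  exact (congrArg₂ (BoundedFormula.Realize (M := A) φ)
    (Subsingleton.elim _ _) (Subsingleton.elim _ _)).mp hA

/-- Every positive Horn sentence true in `A` is true in the power structure `A^ι`
(for `ι` nonempty). -/
theorem stmt1 {L : FirstOrder.Language} [L.IsRelational]
    {A : Type*} [L.Structure A] (ι : Type*) [Nonempty ι]
    (φ : L.Sentence) (hφ : IsPH L φ) (hA : A ⊨ φ) :
    RealizeIn L (ι → A) (powStruct L ι A) φ :=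
  stmt1_general ι φ hφ hA
end

section
/- In the language with one binary relation symbol E: every Π₂ positive Horn sentence true in the two-element structure ({0,1}; ≤) (E interpreted as {(0,0),(0,1),(1,1)}) is true in (ℚ; ≤), but the positive Horn sentence ∃x∀y E(x,y) is true in ({0,1}; ≤) and false in (ℚ; ≤). Hence Π₂ positive Horn containment does not imply full positive Horn containment when the right-hand structure is allowed to be infinite. -/
open FirstOrder Language

/-- Conjunctions of atomic formulas `R(v₁,…,vₙ)`. -/
inductive IsConjAtoms (L : FirstOrder.Language) : ∀ {n : ℕ}, L.BoundedFormula Empty n → Prop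
  | rel {n l : ℕ} (R : L.Relations l) (v : Fin l → Fin n) :
      IsConjAtoms L (BoundedFormula.rel R fun i => Term.var (Sum.inr (v i)))
  | inf {n : ℕ} {φ ψ : L.BoundedFormula Empty n} :
      IsConjAtoms L φ → IsConjAtoms L ψ → IsConjAtoms L (φ ⊓ ψ)

/-- Existentially quantified conjunctions of atoms: `∃y₁…∃yₙ P`. -/
inductive IsExConj (L : FirstOrder.Language) : ∀ {n : ℕ}, L.BoundedFormula Empty n → Prop
  | base {n : ℕ} {φ : L.BoundedFormula Empty n} : IsConjAtoms L φ → IsExConj L φ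
  | ex {n : ℕ} {φ : L.BoundedFormula Empty (n + 1)} : IsExConj L φ → IsExConj L φ.ex

/-- Π₂ positive Horn formulas: `∀x₁…∀xₘ ∃y₁…∃yₙ P` with `P` a conjunction of atoms. -/
inductive IsPi2PH (L : FirstOrder.Language) : ∀ {n : ℕ}, L.BoundedFormula Empty n → Prop
  | base {n : ℕ} {φ : L.BoundedFormula Empty n} : IsExConj L φ → IsPi2PH L φ
  | all {n : ℕ} {φ : L.BoundedFormula Empty (n + 1)} : IsPi2PH L φ → IsPi2PH L φ.all

/-- The relation symbols of the language with a single binary relation symbol `E`. -/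
inductive EdgeSym : ℕ → Type
  | edge : EdgeSym 2

/-- The relational language with one binary relation symbol `E`. -/
def Lgr : FirstOrder.Language := ⟨fun _ => Empty, EdgeSym⟩

/-- The `Lgr`-structure on `M` in which `E` is interpreted as the relation `r`. -/
def relStruct {M : Type*} (r : M → M → Prop) : Lgr.Structure M where
  funMap := fun f _ => Empty.elim f
  RelMap := fun R x =>
    match R, x with
    | EdgeSym.edge, x => r (x 0) (x 1)

/-- The sentence `∃x∀y E(x,y)`. -/
def exAllSentence : Lgr.Sentence :=
  BoundedFormula.ex (BoundedFormula.all
    (BoundedFormula.rel EdgeSym.edge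
      ![Term.var (Sum.inr 0), Term.var (Sum.inr 1)]))

/-! A primitive positive formula (an existentially quantified conjunction of atoms) is preserved
by homomorphisms from powers. For a tuple `xs` in a linear order, the threshold vectors
`i ↦ [xs i ≤ xs j]` in `({0,1}; ≤)^n` are sent back to the `xs j` by the monotone map taking `c` to
the largest `xs i` with `c i = 1`; hence a primitive positive formula valid in `({0,1}; ≤)` holds
at every tuple of the order, and leading universal quantifiers pass through. The sentence
`∃x∀y E(x,y)` asserts a least element, which `ℚ` lacks. -/

/-- `h` is a homomorphism from the power `M^ι`, whose relations hold coordinatewise, to `N`. -/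
def IsPowerHom (L : FirstOrder.Language) {ι M N : Type*} [L.Structure M] [L.Structure N]
    (h : (ι → M) → N) : Prop :=
  ∀ {l : ℕ} (R : L.Relations l) (a : Fin l → ι → M),
    (∀ i, Structure.RelMap R fun k => a k i) → Structure.RelMap R fun k => h (a k)

section PowerHom

variable {L : FirstOrder.Language} {ι M N : Type*} [L.Structure M] [L.Structure N]
  {h : (ι → M) → N} {v : Empty → M} {w : Empty → N}

theorem IsConjAtoms.realize_of_isPowerHom (hh : IsPowerHom L h) {n : ℕ}
    {φ : L.BoundedFormula Empty n} (hφ : IsConjAtoms L φ) (ys : Fin n → ι → M)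
    (hys : ∀ i, φ.Realize v fun j => ys j i) : φ.Realize w fun j => h (ys j) := by
  induction hφ with
  | rel R idx =>
    simp only [BoundedFormula.Realize, Term.realize_var, Sum.elim_inr] at hys ⊢
    exact hh R _ hys
  | inf _ _ ih₁ ih₂ =>
    simp only [BoundedFormula.realize_inf] at hys ⊢
    exact ⟨ih₁ fun i => (hys i).1, ih₂ fun i => (hys i).2⟩

theorem IsExConj.realize_of_isPowerHom (hh : IsPowerHom L h) {n : ℕ}
    {φ : L.BoundedFormula Empty n} (hφ : IsExConj L φ) (ys : Fin n → ι → M)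
    (hys : ∀ i, φ.Realize v fun j => ys j i) : φ.Realize w fun j => h (ys j) := by
  induction hφ with
  | base hψ => exact hψ.realize_of_isPowerHom hh ys hys
  | ex _ ih =>
    simp only [BoundedFormula.realize_ex] at hys ⊢
    choose b hb using hys
    refine ⟨h b, ?_⟩
    have hcol : ∀ i, Fin.snoc (fun j => ys j i) (b i) =
        fun j => Fin.snoc (α := fun _ => ι → M) ys b j i :=
      fun i => (Fin.comp_snoc (fun g : ι → M => g i) ys b).symm
    have := ih (Fin.snoc ys b) fun i => hcol i ▸ hb i
    rwa [show (fun j => h (Fin.snoc (α := fun _ => ι → M) ys b j)) =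
      Fin.snoc (fun j => h (ys j)) (h b) from Fin.comp_snoc h ys b] at this

end PowerHom

theorem IsPi2PH.realize_of_isExConj {L : FirstOrder.Language} {M N : Type*} [L.Structure M]
    [L.Structure N] {v : Empty → M} {w : Empty → N}
    (hpp : ∀ {n : ℕ} {ψ : L.BoundedFormula Empty n}, IsExConj L ψ →
      (∀ ys : Fin n → M, ψ.Realize v ys) → ∀ xs : Fin n → N, ψ.Realize w xs)
    {n : ℕ} {φ : L.BoundedFormula Empty n} (hφ : IsPi2PH L φ)
    (hM : ∀ ys : Fin n → M, φ.Realize v ys) (xs : Fin n → N) : φ.Realize w xs := by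
  induction hφ with
  | base hψ => exact hpp hψ hM xs
  | all _ ih =>
    simp only [BoundedFormula.realize_all] at hM ⊢
    refine fun a => ih (fun ys => ?_) _
    simpa only [Fin.snoc_init_self] using hM (Fin.init ys) (ys (Fin.last _))

theorem isPowerHom_relStruct {ι M N : Type*} {r : M → M → Prop} {s : N → N → Prop}
    {h : (ι → M) → N} (hh : ∀ a b, (∀ i, r (a i) (b i)) → s (h a) (h b)) :
    @IsPowerHom Lgr ι M N (relStruct r) (relStruct s) h := by
  intro l R a ha
  cases R
  exact hh _ _ ha

abbrev orderStruct (α : Type*) [LE α] : Lgr.Structure α :=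
  relStruct (· ≤ ·)

attribute [local instance] orderStruct

section FiniteChain

variable {α ι : Type*} [LinearOrder α] [Fintype ι] (m : α) (xs : ι → α)

def chainRetraction (c : ι → Fin 2) : α :=
  Finset.univ.fold max m fun i => if c i = 1 then xs i else m

def thresholdVector (j : ι) : ι → Fin 2 :=
  fun i => if xs i ≤ xs j then 1 else 0

theorem chainRetraction_mono : Monotone (chainRetraction m xs) := by
  intro c c' hcc'
  refine (Finset.fold_max_le _).2
    ⟨(Finset.le_fold_max _).2 (Or.inl le_rfl), fun i _ => (Finset.le_fold_max _).2 ?_⟩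
  by_cases hc : c i = 1
  · have hc' : c' i = 1 := le_antisymm (Fin.le_last _) (hc ▸ hcc' i)
    exact Or.inr ⟨i, Finset.mem_univ _, by simp [hc, hc']⟩
  · simp [hc]

theorem chainRetraction_thresholdVector (hm : ∀ i, m ≤ xs i) (j : ι) :
    chainRetraction m xs (thresholdVector xs j) = xs j := by
  refine le_antisymm ?_ ?_
  · simp only [chainRetraction, thresholdVector, Finset.fold_max_le]
    refine ⟨hm j, fun i _ => ?_⟩
    split_ifs with h <;> simp_all
  · simp only [chainRetraction, thresholdVector, Finset.le_fold_max]
    exact Or.inr ⟨j, Finset.mem_univ _, by simp⟩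

end FiniteChain

theorem IsExConj.realize_of_forall_realize_fin_two {α : Type*} [LinearOrder α] [Nonempty α]
    {n : ℕ} {φ : Lgr.BoundedFormula Empty n} (hφ : IsExConj Lgr φ) {v : Empty → Fin 2}
    {w : Empty → α} (h2 : ∀ ys : Fin n → Fin 2, φ.Realize v ys) (xs : Fin n → α) :
    φ.Realize w xs := by
  obtain ⟨m, hm⟩ := (Set.finite_range xs).bddBelow
  have hmono : IsPowerHom Lgr (chainRetraction m xs) :=
    isPowerHom_relStruct fun a b hab => chainRetraction_mono m xs hab
  have := hφ.realize_of_isPowerHom (w := w) hmono (thresholdVector xs) fun _ => h2 _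
  simpa only [chainRetraction_thresholdVector m xs fun i => hm ⟨i, rfl⟩] using this

theorem realizeIn_exAllSentence_iff {M : Type*} (r : M → M → Prop) :
    RealizeIn Lgr M (relStruct r) exAllSentence ↔ ∃ x, ∀ y, r x y := by
  simp only [RealizeIn, exAllSentence, Sentence.Realize, Formula.Realize,
    BoundedFormula.realize_ex, BoundedFormula.realize_all]
  rfl

/-- Every Π₂ positive Horn sentence true in `({0,1}; ≤)` is true in `(ℚ; ≤)`, yet the
positive Horn sentence `∃x∀y E(x,y)` is true in `({0,1}; ≤)` and false in `(ℚ; ≤)`: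
Π₂ positive Horn containment does not imply positive Horn containment for infinite
right-hand structures. -/
theorem stmt6 :
    (∀ φ : Lgr.Sentence, IsPi2PH Lgr φ →
      RealizeIn Lgr (Fin 2) (relStruct fun a b : Fin 2 => a ≤ b) φ →
      RealizeIn Lgr ℚ (relStruct fun a b : ℚ => a ≤ b) φ) ∧
    IsPH Lgr exAllSentence ∧
    RealizeIn Lgr (Fin 2) (relStruct fun a b : Fin 2 => a ≤ b) exAllSentence ∧
    ¬ RealizeIn Lgr ℚ (relStruct fun a b : ℚ => a ≤ b) exAllSentence := by
  refine ⟨fun φ hφ h2 => ?_, ?_, ?_, ?_⟩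
  · refine hφ.realize_of_isExConj (v := Empty.elim)
      (fun hψ => hψ.realize_of_forall_realize_fin_two) (fun ys => ?_) _
    unfold RealizeIn Sentence.Realize Formula.Realize at h2
    convert h2
  · rw [exAllSentence]
    convert IsPH.ex (IsPH.all (IsPH.rel (L := Lgr) EdgeSym.edge ![0, 1])) using 4
    funext i
    fin_cases i <;> rfl
  · exact (realizeIn_exAllSentence_iff _).2 ⟨0, Fin.zero_le⟩
  · rw [realizeIn_exAllSentence_iff]
    exact fun ⟨x, hx⟩ => not_isBot x hx
end

section
/- Every Π₂ positive Horn sentence in the language with one binary relation symbol E that is true in the structure with domain ℕ → Fin 2 and E interpreted as the pointwise order (E(f,g) iff f i ≤ g i for every i : ℕ) is true in (ℕ; ≤). -/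
/-!
A Π₂ positive Horn sentence `∀ x̄ ∃ ȳ P` transfers from `M` to `N` as soon as every finite tuple of
`N` is the image of a tuple of `M` under a homomorphism `M → N`: `∃ ȳ P` holds at the preimage in
`M`, and existentially quantified conjunctions of atoms are preserved by homomorphisms. For
`M = ℕ → Fin 2` and `N = ℕ`, a tuple bounded by `K` is the image of indicators of initial segments
under `f ↦ #{i < K | f i = 1}`, which is monotone.
-/

open FirstOrder Language

open BoundedFormula

section Preservation

variable {L : Language} {M N : Type*} [L.Structure M] [L.Structure N]

theorem IsConjAtoms.realize_comp {n : ℕ} {φ : L.BoundedFormula Empty n} (hφ : IsConjAtoms L φ)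
    (f : M →[L] N) {v : Empty → M} {xs : Fin n → M} :
    φ.Realize v xs → φ.Realize (f ∘ v) (f ∘ xs) := by
  induction hφ with
  | rel R vs => exact f.map_rel R _
  | inf _ _ ih₁ ih₂ =>
    simp only [realize_inf]
    exact fun h => ⟨ih₁ h.1, ih₂ h.2⟩

theorem IsExConj.realize_comp {n : ℕ} {φ : L.BoundedFormula Empty n} (hφ : IsExConj L φ)
    (f : M →[L] N) {v : Empty → M} {xs : Fin n → M} :
    φ.Realize v xs → φ.Realize (f ∘ v) (f ∘ xs) := by
  induction hφ with
  | base hφ => exact hφ.realize_comp f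
  | ex _ ih =>
    simp only [realize_ex]
    rintro ⟨a, ha⟩
    exact ⟨f a, by simpa only [Fin.comp_snoc] using ih ha⟩

theorem IsPi2PH.realize_of_forall_exists_hom {n : ℕ} {φ : L.BoundedFormula Empty n}
    (hφ : IsPi2PH L φ)
    (hcover : ∀ {k : ℕ} (xs : Fin k → N), ∃ (f : M →[L] N) (ys : Fin k → M), f ∘ ys = xs)
    (hM : ∀ ys : Fin n → M, φ.Realize default ys) (xs : Fin n → N) :
    φ.Realize default xs := by
  induction hφ with
  | base hφ =>
    obtain ⟨f, ys, rfl⟩ := hcover xs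
    simpa only [Subsingleton.elim (f ∘ default) default] using hφ.realize_comp f (hM ys)
  | all _ ih =>
    refine realize_all.2 fun a => ih (fun ys => ?_) _
    simpa only [Fin.snoc_init_self] using realize_all.1 (hM (Fin.init ys)) (ys (Fin.last _))

theorem IsPi2PH.realize_sentence_of_forall_exists_hom {φ : L.Sentence} (hφ : IsPi2PH L φ)
    (hcover : ∀ {k : ℕ} (xs : Fin k → N), ∃ (f : M →[L] N) (ys : Fin k → M), f ∘ ys = xs)
    (hM : M ⊨ φ) : N ⊨ φ :=
  hφ.realize_of_forall_exists_hom hcover (fun ys => Subsingleton.elim default ys ▸ hM) default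

end Preservation

def relStructHom {M N : Type*} {r : M → M → Prop} {s : N → N → Prop} (f : M → N)
    (hf : ∀ a b, r a b → s (f a) (f b)) : @Hom Lgr M N (relStruct r) (relStruct s) :=
  @Hom.mk Lgr M N (relStruct r) (relStruct s) f (fun g => Empty.elim g)
    (fun R x hx => by cases R; exact hf _ _ hx)

def countOnesBelow (K : ℕ) (f : ℕ → Fin 2) : ℕ := ∑ i ∈ Finset.range K, (f i : ℕ)

theorem countOnesBelow_monotone (K : ℕ) : Monotone (countOnesBelow K) :=
  fun _ _ hfg => Finset.sum_le_sum fun i _ => hfg i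

theorem countOnesBelow_indicator {K k : ℕ} (hk : k ≤ K) :
    countOnesBelow K (fun i => if i < k then 1 else 0) = k := by
  have hfilter : {i ∈ Finset.range K | i < k} = Finset.range k := by
    ext i
    simp only [Finset.mem_filter, Finset.mem_range]
    omega
  simp [countOnesBelow, apply_ite, hfilter]

section PowerToNat

local instance : Lgr.Structure (ℕ → Fin 2) := relStruct fun f g : ℕ → Fin 2 => ∀ i, f i ≤ g i
local instance : Lgr.Structure ℕ := relStruct fun a b : ℕ => a ≤ b

theorem exists_hom_pow_fin_two_nat {k : ℕ} (xs : Fin k → ℕ) :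
    ∃ (f : (ℕ → Fin 2) →[Lgr] ℕ) (ys : Fin k → ℕ → Fin 2), f ∘ ys = xs := by
  obtain ⟨K, hK⟩ := Finite.exists_le xs
  refine ⟨relStructHom (countOnesBelow K) fun _ _ h => countOnesBelow_monotone K h,
    fun j i => if i < xs j then 1 else 0, ?_⟩
  funext j
  exact countOnesBelow_indicator (hK j)

end PowerToNat

/-- Every Π₂ positive Horn sentence true in the ℕ-indexed power of the two-element
reflexive chain (domain `ℕ → Fin 2`, `E` the pointwise order) is true in `(ℕ; ≤)`. -/
theorem stmt9 (φ : Lgr.Sentence) (hφ : IsPi2PH Lgr φ)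
    (hpow : RealizeIn Lgr (ℕ → Fin 2)
      (relStruct fun f g : ℕ → Fin 2 => ∀ i : ℕ, f i ≤ g i) φ) :
    RealizeIn Lgr ℕ (relStruct fun a b : ℕ => a ≤ b) φ := by
  let _ : Lgr.Structure (ℕ → Fin 2) := relStruct fun f g : ℕ → Fin 2 => ∀ i, f i ≤ g i
  let _ : Lgr.Structure ℕ := relStruct fun a b : ℕ => a ≤ b
  exact hφ.realize_sentence_of_forall_exists_hom exists_hom_pow_fin_two_nat hpow
end

section
/- Fix k ≥ 2 and r ≥ 0. There exists a surjective function f : (Fin r → Fin k) → Fin 2 such that (i) for all x, y : Fin r → Fin k, if y j = x j + 1 (addition modulo k in Fin k) for all j : Fin r then f y = f x, and (ii) for all x : Fin r → Fin k, if x j ≠ 0 for all j : Fin r then f x = 1, if and only if r ≥ k. -/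
/-!
If `r < k`, a function `f` as in the statement is invariant under adding any constant tuple
`(t, …, t)`, and some such shift moves a given `x` off `0` in every coordinate, because the `r`
coordinates of `x` rule out at most `r < k` values of `t`; hence `f ≡ 1`. If `k ≤ r`, the tuple
`a j = j mod k` takes every value, so every diagonal shift of `a` has a zero coordinate, and the
function that is `0` exactly on the orbit of `a` under diagonal shifts does the job.
-/

open Function

section DiagonalShift

variable {ι G α : Type*}

theorem forall_add_one_imp_eq_iff_periodic [Add G] [One G] {f : (ι → G) → α} :
    (∀ x y : ι → G, (∀ j, y j = x j + 1) → f y = f x) ↔ Periodic f 1 :=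
  ⟨fun h x => h x _ fun _ => rfl, fun h x _ hxy => funext hxy ▸ h x⟩

theorem exists_forall_add_ne_zero [AddGroup G] [Fintype ι] [Fintype G]
    (hcard : Fintype.card ι < Fintype.card G) (x : ι → G) : ∃ t : G, ∀ j, x j + t ≠ 0 := by
  by_contra! h
  have hsurj : Surjective fun j => -x j := fun t =>
    (h t).imp fun _ => neg_eq_of_add_eq_zero_right
  exact hcard.not_ge (Fintype.card_le_of_surjective _ hsurj)

theorem eq_of_forall_periodic_const [AddGroup G] [Fintype ι] [Fintype G]
    (hcard : Fintype.card ι < Fintype.card G) {f : (ι → G) → α}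
    (hf : ∀ t, Periodic f (const ι t)) {b : α} (hb : ∀ x, (∀ j, x j ≠ 0) → f x = b)
    (x : ι → G) : f x = b := by
  obtain ⟨t, ht⟩ := exists_forall_add_ne_zero hcard x
  rw [← hf t x]
  exact hb _ ht

theorem add_const_mem_orbit_iff [AddCommGroup G] {a z : ι → G} (c : G) :
    z + const ι c ∈ AddAction.orbit G a ↔ z ∈ AddAction.orbit G a := by
  have hvadd : z + const ι c = c +ᵥ z := funext fun _ => add_comm _ _
  rw [hvadd, ← AddAction.orbit_eq_iff, AddAction.orbit_vadd, AddAction.orbit_eq_iff]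

theorem exists_eq_zero_of_mem_orbit [AddCommGroup G] {a z : ι → G} (ha : Surjective a)
    (hz : z ∈ AddAction.orbit G a) : ∃ j, z j = 0 := by
  obtain ⟨c, rfl⟩ := hz
  obtain ⟨j, hj⟩ := ha (-c)
  exact ⟨j, show c + a j = 0 by rw [hj, add_neg_cancel]⟩

theorem exists_surjective_forall_periodic_const [AddCommGroup G] {a : ι → G}
    (ha : Surjective a) {x₁ : ι → G} (hx₁ : ∀ j, x₁ j ≠ 0) :
    ∃ f : (ι → G) → Fin 2, Surjective f ∧ (∀ t, Periodic f (const ι t)) ∧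
      (∀ x, (∀ j, x j ≠ 0) → f x = 1) := by
  classical
  let f : (ι → G) → Fin 2 := fun z => if z ∈ AddAction.orbit G a then 0 else 1
  have hf_one : ∀ x, (∀ j, x j ≠ 0) → f x = 1 := fun x hx =>
    if_neg fun hmem => (exists_eq_zero_of_mem_orbit ha hmem).elim hx
  refine ⟨f, fun b => ?_, fun t z => by simp only [f, add_const_mem_orbit_iff], hf_one⟩
  fin_cases b
  · exact ⟨a, if_pos (AddAction.mem_orbit_self a)⟩
  · exact ⟨x₁, hf_one x₁ hx₁⟩

end DiagonalShift

section Fin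

variable {ι α : Type*} {k : ℕ} [NeZero k]

open Fin.CommRing in
theorem Fin.val_nsmul_one (t : Fin k) : t.val • (1 : Fin k) = t :=
  (nsmul_one t.val).trans (Fin.cast_val_eq_self t)

theorem Fin.periodic_one_iff_forall_periodic_const {f : (ι → Fin k) → α} :
    Periodic f 1 ↔ ∀ t, Periodic f (const ι t) := by
  refine ⟨fun h t => ?_, fun h => h 1⟩
  have hconst : t.val • (1 : ι → Fin k) = const ι t := funext fun _ => Fin.val_nsmul_one t
  exact hconst ▸ h.nsmul t.val

theorem Fin.ofNat_comp_val_surjective {r : ℕ} (hkr : k ≤ r) :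
    Surjective fun j : Fin r => Fin.ofNat k j :=
  fun t => ⟨Fin.castLE hkr t, Fin.ofNat_val_eq_self t⟩

end Fin

/-- For `k ≥ 2`: there is a surjective homomorphism from the `r`-th power of the
directed `k`-cycle-with-`U = [k] \ {0}` to the structure `({0,1}; E = {(0,0),(1,1)},
U = {1})` — i.e. a surjective `f : (Fin r → Fin k) → Fin 2` constant along the
componentwise successor-mod-`k` map and sending tuples avoiding `0` to `1` — if and
only if `r ≥ k`. -/
theorem stmt11 (k r : ℕ) (hk : 2 ≤ k) [NeZero k] :
    (∃ f : (Fin r → Fin k) → Fin 2, Function.Surjective f ∧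
      (∀ x y : Fin r → Fin k, (∀ j, y j = x j + 1) → f y = f x) ∧
      (∀ x : Fin r → Fin k, (∀ j, x j ≠ 0) → f x = 1)) ↔ k ≤ r := by
  simp only [forall_add_one_imp_eq_iff_periodic, Fin.periodic_one_iff_forall_periodic_const]
  constructor
  · rintro ⟨f, hsurj, hper, hzero⟩
    by_contra! hrk
    obtain ⟨x, hx⟩ := hsurj 0
    have hx_one : f x = 1 := eq_of_forall_periodic_const (by simpa using hrk) hper hzero x
    exact zero_ne_one (hx.symm.trans hx_one)
  · intro hkr
    have hone : (1 : Fin k) ≠ 0 := by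
      obtain ⟨m, rfl⟩ : ∃ m, k = m + 2 := ⟨k - 2, by omega⟩
      exact one_ne_zero
    exact exists_surjective_forall_periodic_const (Fin.ofNat_comp_val_surjective hkr)
      (x₁ := fun _ => 1) fun _ => hone
end

section
/- Let G be a finite nonempty simple graph that is 2-colorable and has no isolated vertices, regarded as a structure for the language with one binary relation symbol E interpreted as the (symmetric, irreflexive) adjacency relation, and let K₂ be the graph with two vertices joined by an edge, similarly regarded. Then G and K₂ satisfy exactly the same positive Horn sentences. -/
open FirstOrder Language

/-! Positive Horn formulas are preserved by surjective homomorphisms, and a product satisfies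
every positive Horn sentence that holds in all of its factors. A proper 2-colouring is a
surjective homomorphism `G → K₂`. Conversely, `K₂^I` is the perfect matching `x ~ rev ∘ x`;
sending each of its edges onto an edge of `G`, so that every vertex of `G` is hit, gives a
surjective homomorphism `K₂^I → G` once `I` is large enough (`I = Option V` will do). -/

namespace FirstOrder.Language

variable {L : Language}

instance piStructure {I : Type*} (M : I → Type*) [∀ i, L.Structure (M i)] :
    L.Structure (∀ i, M i) where
  funMap f x i := Structure.funMap f fun k => x k i
  RelMap r x := ∀ i, Structure.RelMap r fun k => x k i

end FirstOrder.Language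

namespace IsPH

variable {L : Language}

theorem realize_comp_of_surjective {M N : Type*} [L.Structure M] [L.Structure N]
    (f : M →[L] N) (hf : Function.Surjective f) {n : ℕ} {φ : L.BoundedFormula Empty n}
    (hφ : IsPH L φ) {v : Empty → M} {xs : Fin n → M} (h : φ.Realize v xs) :
    φ.Realize (f ∘ v) (f ∘ xs) := by
  induction hφ with
  | rel R _ => exact f.map_rel R _ h
  | inf _ _ ih₁ ih₂ =>
    rw [BoundedFormula.realize_inf] at h ⊢
    exact ⟨ih₁ h.1, ih₂ h.2⟩
  | ex _ ih =>
    obtain ⟨a, ha⟩ := BoundedFormula.realize_ex.1 h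
    exact BoundedFormula.realize_ex.2 ⟨f a, by simpa only [Fin.comp_snoc] using ih ha⟩
  | all _ ih =>
    refine BoundedFormula.realize_all.2 fun b => ?_
    obtain ⟨a, rfl⟩ := hf b
    simpa only [Fin.comp_snoc] using ih (h a)

theorem realize_sentence_of_surjective {M N : Type*} [L.Structure M] [L.Structure N]
    (f : M →[L] N) (hf : Function.Surjective f) {φ : L.Sentence} (hφ : IsPH L φ)
    (h : M ⊨ φ) : N ⊨ φ := by
  have := hφ.realize_comp_of_surjective f hf h
  rwa [Subsingleton.elim (f ∘ _) default, Subsingleton.elim (f ∘ _) default] at this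

theorem realize_pi {I : Type*} {M : I → Type*} [∀ i, L.Structure (M i)] {n : ℕ}
    {φ : L.BoundedFormula Empty n} (hφ : IsPH L φ) {v : Empty → ∀ i, M i}
    {xs : Fin n → ∀ i, M i} (h : ∀ i, φ.Realize (fun x => v x i) fun k => xs k i) :
    φ.Realize v xs := by
  induction hφ with
  | rel R _ => exact h
  | inf _ _ ih₁ ih₂ =>
    simp only [BoundedFormula.realize_inf, forall_and] at h ⊢
    exact ⟨ih₁ h.1, ih₂ h.2⟩
  | ex _ ih =>
    simp only [BoundedFormula.realize_ex] at h
    choose a ha using h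
    refine BoundedFormula.realize_ex.2 ⟨a, ih fun i => ?_⟩
    convert ha i using 2 with k
    induction k using Fin.lastCases <;> simp
  | all _ ih =>
    refine BoundedFormula.realize_all.2 fun a => ih fun i => ?_
    convert BoundedFormula.realize_all.1 (h i) (a i) using 2 with k
    induction k using Fin.lastCases <;> simp

theorem realize_sentence_pi {I : Type*} {M : I → Type*} [∀ i, L.Structure (M i)]
    {φ : L.Sentence} (hφ : IsPH L φ) (h : ∀ i, M i ⊨ φ) : (∀ i, M i) ⊨ φ :=
  hφ.realize_pi fun i => by
    rw [Subsingleton.elim (fun x : Empty => _) default,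
      Subsingleton.elim (fun k : Fin 0 => _) default]
    exact h i

end IsPH

def homToRelStruct {M N : Type*} [Lgr.Structure M] {r : N → N → Prop} (f : M → N)
    (hf : ∀ x : Fin 2 → M, Structure.RelMap (L := Lgr) EdgeSym.edge x →
      r (f (x 0)) (f (x 1))) :
    @Hom Lgr M N _ (relStruct r) :=
  @Hom.mk Lgr M N _ (relStruct r) f (fun g => nomatch g) fun R x hx => by
    cases R
    exact hf x hx

namespace SimpleGraph

variable {V : Type*} {G : SimpleGraph V}

theorem Coloring.surjective_of_adj (C : G.Coloring (Fin 2)) {v w : V} (h : G.Adj v w) :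
    Function.Surjective C := by
  have eq_of_ne_of_ne : ∀ a b t : Fin 2, a ≠ b → t ≠ a → t = b := by decide
  intro t
  by_cases ht : t = C v
  · exact ⟨v, ht.symm⟩
  · exact ⟨w, (eq_of_ne_of_ne _ _ t (C.valid h) ht).symm⟩

theorem exists_surjective_hom_from_fin_two_pow [Nonempty V] (hG : ∀ v, ∃ w, G.Adj v w) :
    ∃ f : (Option V → Fin 2) → V, Function.Surjective f ∧
      ∀ x y : Option V → Fin 2, (∀ i, x i ≠ y i) → G.Adj (f x) (f y) := by
  classical
  choose nb hnb using hG
  let e : V → Option V → Fin 2 := fun v i => if i = some v then 1 else 0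
  have he : e.Injective := fun v w h => by simpa [e] using congrFun h (some v)
  let p := Function.invFun e
  have rev_of_ne : ∀ a b : Fin 2, a ≠ b → b = a.rev := by decide
  -- `x none` picks one end of each edge `{x, rev ∘ x}`; `e v` is such an end, mapped to `v`.
  refine ⟨fun x => if x none = 0 then p x else nb (p (Fin.rev ∘ x)),
    fun v => ⟨e v, by simp [e, p, Function.leftInverse_invFun he v]⟩, fun x y hxy => ?_⟩
  obtain rfl : y = Fin.rev ∘ x := funext fun i => rev_of_ne _ _ (hxy i)
  by_cases hx : x none = 0
  · simpa [hx, Function.comp_def] using hnb (p x)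
  · have hrev : (Fin.rev ∘ x) none = 0 := (rev_of_ne _ _ hx).symm
    dsimp only
    rw [if_neg hx, if_pos hrev]
    exact (hnb _).symm

end SimpleGraph

theorem stmt15_general {V : Type} [Nonempty V] (G : SimpleGraph V)
    (hcol : G.Colorable 2) (hiso : ∀ v : V, ∃ w : V, G.Adj v w)
    (φ : Lgr.Sentence) (hφ : IsPH Lgr φ) :
    RealizeIn Lgr V (relStruct fun a b : V => G.Adj a b) φ ↔
      RealizeIn Lgr (Fin 2) (relStruct fun a b : Fin 2 => a ≠ b) φ := by
  let _ : Lgr.Structure V := relStruct G.Adj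
  let _ : Lgr.Structure (Fin 2) := relStruct (· ≠ ·)
  obtain ⟨w, hvw⟩ := hiso (Classical.arbitrary V)
  obtain ⟨f, hf, hf_adj⟩ := G.exists_surjective_hom_from_fin_two_pow hiso
  let C := hcol.some
  constructor
  · exact hφ.realize_sentence_of_surjective (homToRelStruct C fun x hx => C.valid hx)
      (C.surjective_of_adj hvw)
  · exact fun hK => hφ.realize_sentence_of_surjective
      (homToRelStruct f fun x hx => hf_adj (x 0) (x 1) hx) hf (hφ.realize_sentence_pi fun _ => hK)

/-- A finite nonempty 2-colorable simple graph with no isolated vertices satisfies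
exactly the same positive Horn sentences as `K₂` (two vertices joined by an edge). -/
theorem stmt15 {V : Type} [Fintype V] [Nonempty V] (G : SimpleGraph V)
    (hcol : G.Colorable 2) (hiso : ∀ v : V, ∃ w : V, G.Adj v w)
    (φ : Lgr.Sentence) (hφ : IsPH Lgr φ) :
    RealizeIn Lgr V (relStruct fun a b : V => G.Adj a b) φ ↔
      RealizeIn Lgr (Fin 2) (relStruct fun a b : Fin 2 => a ≠ b) φ :=
  stmt15_general G hcol hiso φ hφ
end

section
/- There is no finite digraph F with the property that for every positive Horn sentence ψ in the language with one binary relation symbol E: F satisfies ψ if and only if ψ is true in every digraph satisfying ∀x∃y E(x,y). In other words, the sentence ∀x∃y E(x,y) admits no finite canonical model for positive Horn entailment. -/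
open FirstOrder Language

/-! A would-be canonical model `F` satisfies the positive Horn sentences `∀x ∃y E(x,y)` and
`∃x ∃y E(x,y)`, so it is a nonempty serial digraph; being finite, it contains a closed walk, of
length `m + 1` say. "There is a closed walk of length `m + 1`" is a positive Horn sentence, but it
fails in the serial digraph `(ℕ, <)`. -/

open Function

section ClosedWalk

variable {M : Type*} (r : M → M → Prop)

/-- `xs 0 → xs 1 → ⋯ → xs m → xs 0`; the closed walk has length `m + 1`. -/
def HasClosedWalk (m : ℕ) : Prop :=
  ∃ xs : Fin (m + 1) → M, ∀ i, r (xs i) (xs (i + 1))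

theorem exists_isPeriodicPt_of_finite [Finite M] [Nonempty M] (f : M → M) :
    ∃ x n, 0 < n ∧ IsPeriodicPt f n x := by
  obtain ⟨a⟩ := ‹Nonempty M›
  obtain ⟨i, j, hne, hij⟩ := Finite.exists_ne_map_eq_of_infinite fun n : ℕ => f^[n] a
  wlog hlt : i < j generalizing i j
  · exact this j i hne.symm hij.symm (hne.lt_or_gt.resolve_left hlt)
  refine ⟨f^[i] a, j - i, Nat.sub_pos_of_lt hlt, ?_⟩
  rw [IsPeriodicPt, IsFixedPt, ← iterate_add_apply, Nat.sub_add_cancel hlt.le, hij]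

theorem hasClosedWalk_of_isPeriodicPt {f : M → M} (hf : ∀ x, r x (f x)) {m : ℕ} {x : M}
    (hx : IsPeriodicPt f (m + 1) x) : HasClosedWalk r m := by
  refine ⟨fun t => f^[t] x, fun t => ?_⟩
  simp only [Fin.val_add, Fin.val_one', Nat.add_mod_mod, hx.iterate_mod_apply,
    iterate_succ_apply']
  exact hf _

theorem exists_hasClosedWalk [Finite M] [Nonempty M] (hr : ∀ x, ∃ y, r x y) :
    ∃ m, HasClosedWalk r m := by
  choose f hf using hr
  obtain ⟨x, n, hn, hx⟩ := exists_isPeriodicPt_of_finite f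
  obtain ⟨m, rfl⟩ := Nat.exists_eq_add_one_of_ne_zero hn.ne'
  exact ⟨m, hasClosedWalk_of_isPeriodicPt r hf hx⟩

theorem not_hasClosedWalk_lt {α : Type*} [LinearOrder α] (m : ℕ) :
    ¬ HasClosedWalk (M := α) (· < ·) m := by
  rintro ⟨xs, hxs⟩
  obtain ⟨i, hi⟩ := Finite.exists_max xs
  exact (hxs i).not_ge (hi _)

end ClosedWalk

namespace IsPH

variable {L : FirstOrder.Language}

theorem exs : ∀ {n : ℕ} {φ : L.BoundedFormula Empty n}, IsPH L φ → IsPH L φ.exs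
  | 0, _, h => h
  | _ + 1, φ, h => exs (φ := φ.ex) h.ex

end IsPH

/-- Unlike `BoundedFormula.iInf`, this conjunction involves no `⊤`, which is not positive Horn. -/
def finInf {L : FirstOrder.Language} {α : Type*} {n : ℕ} :
    (k : ℕ) → (Fin (k + 1) → L.BoundedFormula α n) → L.BoundedFormula α n
  | 0, φ => φ 0
  | k + 1, φ => finInf k (fun i => φ i.castSucc) ⊓ φ (Fin.last (k + 1))

theorem isPH_finInf {L : FirstOrder.Language} {n : ℕ} :
    ∀ {k : ℕ} {φ : Fin (k + 1) → L.BoundedFormula Empty n}, (∀ i, IsPH L (φ i)) →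
      IsPH L (finInf k φ)
  | 0, _, h => h 0
  | _ + 1, _, h => (isPH_finInf fun _ => h _).inf (h _)

theorem realize_finInf {L : FirstOrder.Language} {M : Type*} [L.Structure M] {α : Type*}
    {n : ℕ} {v : α → M} {xs : Fin n → M} :
    ∀ {k : ℕ} {φ : Fin (k + 1) → L.BoundedFormula α n},
      (finInf k φ).Realize v xs ↔ ∀ i, (φ i).Realize v xs
  | 0, _ => by simp [finInf, Fin.forall_fin_one]
  | _ + 1, φ => by
    rw [finInf, BoundedFormula.realize_inf, realize_finInf]
    exact (Fin.forall_fin_succ' (P := fun i => (φ i).Realize v xs)).symm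

def edgeAtom {n : ℕ} (i j : Fin n) : Lgr.BoundedFormula Empty n :=
  BoundedFormula.rel EdgeSym.edge fun k => Term.var (Sum.inr (![i, j] k))

theorem isPH_edgeAtom {n : ℕ} (i j : Fin n) : IsPH Lgr (edgeAtom i j) :=
  IsPH.rel (L := Lgr) EdgeSym.edge ![i, j]

section Sentences

variable {M : Type*} (r : M → M → Prop)

def serialSentence : Lgr.Sentence := (edgeAtom 0 1).ex.all

def someEdgeSentence : Lgr.Sentence := (edgeAtom 0 1).ex.ex

def closedWalkSentence (m : ℕ) : Lgr.Sentence :=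
  (finInf m fun i : Fin (m + 1) => edgeAtom i (i + 1)).exs

theorem isPH_serialSentence : IsPH Lgr serialSentence := (isPH_edgeAtom 0 1).ex.all

theorem isPH_someEdgeSentence : IsPH Lgr someEdgeSentence := (isPH_edgeAtom 0 1).ex.ex

theorem isPH_closedWalkSentence (m : ℕ) : IsPH Lgr (closedWalkSentence m) :=
  (isPH_finInf fun _ => isPH_edgeAtom _ _).exs

theorem realizeIn_serialSentence :
    RealizeIn Lgr M (relStruct r) serialSentence ↔ ∀ x, ∃ y, r x y := by
  let := relStruct r
  exact BoundedFormula.realize_all.trans (forall_congr' fun _ => BoundedFormula.realize_ex)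

theorem realizeIn_someEdgeSentence :
    RealizeIn Lgr M (relStruct r) someEdgeSentence ↔ ∃ x y, r x y := by
  let := relStruct r
  exact BoundedFormula.realize_ex.trans (exists_congr fun _ => BoundedFormula.realize_ex)

theorem realizeIn_closedWalkSentence (m : ℕ) :
    RealizeIn Lgr M (relStruct r) (closedWalkSentence m) ↔ HasClosedWalk r m := by
  let := relStruct r
  exact BoundedFormula.realize_exs.trans
    (exists_congr fun _ => realize_finInf (L := Lgr) (M := M))

end Sentences

/-- The sentence `∀x∃y E(x,y)` admits no finite canonical model for positive Horn
entailment: no finite digraph `F` satisfies precisely those positive Horn sentences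
that are true in every digraph satisfying `∀x∃y E(x,y)`. -/
theorem stmt17 :
    ¬ ∃ (F : Type) (_ : Fintype F) (EF : F → F → Prop),
      ∀ ψ : Lgr.Sentence, IsPH Lgr ψ →
        (RealizeIn Lgr F (relStruct EF) ψ ↔
          ∀ (D : Type) (ED : D → D → Prop), Nonempty D → (∀ x : D, ∃ y : D, ED x y) →
            RealizeIn Lgr D (relStruct ED) ψ) := by
  rintro ⟨F, _, EF, hF⟩
  have serial : ∀ x, ∃ y, EF x y := (realizeIn_serialSentence EF).1 <|
    (hF _ isPH_serialSentence).2 fun _ ED _ hD => (realizeIn_serialSentence ED).2 hD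
  have : Nonempty F := by
    obtain ⟨x, -, -⟩ := (realizeIn_someEdgeSentence EF).1 <|
      (hF _ isPH_someEdgeSentence).2 fun _ ED ⟨x⟩ hD =>
        (realizeIn_someEdgeSentence ED).2 ⟨x, hD x⟩
    exact ⟨x⟩
  obtain ⟨m, hF_walk⟩ := exists_hasClosedWalk EF serial
  have hℕ_walk := (hF _ (isPH_closedWalkSentence m)).1
    ((realizeIn_closedWalkSentence EF m).2 hF_walk) ℕ (· < ·) ⟨0⟩
    fun x => ⟨x + 1, x.lt_succ_self⟩
  exact not_hasClosedWalk_lt m ((realizeIn_closedWalkSentence _ m).1 hℕ_walk)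
end

section
/- For every positive Horn sentence ψ in the language with one binary relation symbol E: ψ is true in every finite digraph satisfying ∀x∃y (E(x,y) ∧ E(y,x)) if and only if ψ is true in K₂, the digraph on {0,1} with edges (0,1) and (1,0). -/
open FirstOrder Language

/-!
`K₂` is itself such a digraph. Conversely, a positive Horn sentence true in `M` stays true in
every image of a power `M^I` under a surjective homomorphism: atoms, conjunctions and
existentials are evaluated coordinatewise, and surjectivity takes care of universals. The power
`K₂^I` is a perfect matching pairing each `f` with its complement, so a homomorphism onto a
digraph `D` only has to send every complementary pair onto some 2-cycle `x ⇄ m x`. With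
`I = Option D`, the indicator of `some x` is sent to `x`, and the coordinate `none` orients
each pair.
-/

open Structure

namespace IsPH

variable {L : FirstOrder.Language} {M N I : Type*} [L.Structure M] [L.Structure N]

theorem realize_of_hom_pi (h : (I → M) → N) (hsurj : Function.Surjective h)
    (hrel : ∀ {l} (R : L.Relations l) (xs : Fin l → I → M),
      (∀ i, RelMap R fun k => xs k i) → RelMap R fun k => h (xs k))
    {n : ℕ} {φ : L.BoundedFormula Empty n} (hφ : IsPH L φ) (xs : Fin n → I → M)
    (hxs : ∀ i, φ.Realize default ((· i) ∘ xs)) :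
    φ.Realize default (h ∘ xs) := by
  induction hφ with
  | rel R v => exact hrel R (fun k => xs (v k)) hxs
  | inf _ _ ih₁ ih₂ =>
    simp only [BoundedFormula.realize_inf] at hxs ⊢
    exact ⟨ih₁ xs fun i => (hxs i).1, ih₂ xs fun i => (hxs i).2⟩
  | ex _ ih =>
    simp only [BoundedFormula.realize_ex] at hxs ⊢
    choose y hy using hxs
    refine ⟨h y, ?_⟩
    rw [← Fin.comp_snoc]
    exact ih (Fin.snoc xs y) fun i => by rw [Fin.comp_snoc]; exact hy i
  | all _ ih =>
    simp only [BoundedFormula.realize_all] at hxs ⊢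
    intro b
    obtain ⟨y, rfl⟩ := hsurj b
    rw [← Fin.comp_snoc]
    exact ih (Fin.snoc xs y) fun i => by rw [Fin.comp_snoc]; exact hxs i (y i)

theorem realize_sentence_of_hom_pi (h : (I → M) → N) (hsurj : Function.Surjective h)
    (hrel : ∀ {l} (R : L.Relations l) (xs : Fin l → I → M),
      (∀ i, RelMap R fun k => xs k i) → RelMap R fun k => h (xs k))
    {ψ : L.Sentence} (hψ : IsPH L ψ) (hM : M ⊨ ψ) : N ⊨ ψ := by
  unfold Sentence.Realize Formula.Realize at hM ⊢
  have hN := hψ.realize_of_hom_pi h hsurj hrel default fun _ => by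
    convert hM
  convert hN

end IsPH

lemma Fin.eq_rev_of_ne_of_two {a b : Fin 2} (h : a ≠ b) : b = a.rev := by
  revert a b; decide

section Digraph

variable {D : Type*}

open scoped Classical in
noncomputable def singletonCode (x : D) : Option D → Fin 2 :=
  fun o => if o = some x then 1 else 0

lemma singletonCode_injective : Function.Injective (singletonCode (D := D)) := by
  intro x y hxy
  simpa [singletonCode] using congrFun hxy (some x)

@[simp] lemma singletonCode_none (x : D) : singletonCode x none = 0 := by
  simp [singletonCode]

noncomputable def foldOntoDigraph [Nonempty D] (m : D → D) (f : Option D → Fin 2) : D :=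
  if f none = 0 then Function.invFun singletonCode f
  else m (Function.invFun singletonCode (Fin.rev ∘ f))

lemma foldOntoDigraph_surjective [Nonempty D] (m : D → D) :
    Function.Surjective (foldOntoDigraph m) := fun x =>
  ⟨singletonCode x, by
    simp [foldOntoDigraph, Function.leftInverse_invFun singletonCode_injective x]⟩

lemma foldOntoDigraph_adj [Nonempty D] {E : D → D → Prop} {m : D → D}
    (hm : ∀ x, E x (m x) ∧ E (m x) x) {f g : Option D → Fin 2} (hfg : ∀ i, f i ≠ g i) :
    E (foldOntoDigraph m f) (foldOntoDigraph m g) := by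
  obtain rfl : g = Fin.rev ∘ f := funext fun i => Fin.eq_rev_of_ne_of_two (hfg i)
  by_cases hf : f none = 0
  · simpa [foldOntoDigraph, hf, Function.comp_def] using (hm _).1
  · have hf' : f none = 1 := by omega
    simpa [foldOntoDigraph, hf'] using (hm _).2

end Digraph

/-- A positive Horn sentence is true in every finite digraph satisfying
`∀x∃y (E(x,y) ∧ E(y,x))` if and only if it is true in `K₂`, the digraph on `{0,1}`
with edges `(0,1)` and `(1,0)`. -/
theorem stmt18 (ψ : Lgr.Sentence) (hψ : IsPH Lgr ψ) :
    (∀ (D : Type) (ED : D → D → Prop), Finite D → Nonempty D →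
      (∀ x : D, ∃ y : D, ED x y ∧ ED y x) → RealizeIn Lgr D (relStruct ED) ψ) ↔
    RealizeIn Lgr (Fin 2) (relStruct fun a b : Fin 2 => a ≠ b) ψ := by
  refine ⟨fun h => h (Fin 2) _ inferInstance ⟨0⟩ fun x => ⟨x.rev, by revert x; decide⟩,
    fun hK₂ D ED _ _ hsym => ?_⟩
  choose m hm using hsym
  let _ := relStruct ED
  let _ := relStruct fun a b : Fin 2 => a ≠ b
  refine hψ.realize_sentence_of_hom_pi (foldOntoDigraph m) (foldOntoDigraph_surjective m)
    (fun R xs hxs => ?_) hK₂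
  cases R
  exact foldOntoDigraph_adj hm hxs
end
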